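/- arXiv:0810.1135 — 4 statements merged into one kernel-verified Lean document; each statement's English description precedes it below -/
import Mathlib

section
/- An ℝ-linear map φ : ℍ → ℍ satisfies φ ∘ φ = -id and commutes with right multiplication R_w for every w ∈ ℍ if and only if φ = L_q (left multiplication by q) for a purely imaginary quaternion q with ‖q‖ = 1; moreover such q is unique. (This identifies the twistor fiber SO(4)/U(2) of complex structures compatible with metric and orientation with the unit 2-sphere of imaginary quaternions.) -/
/-! A map commuting with every right multiplication is left multiplication by its value at `1`,
so `φ = L_q` with `q = φ 1`, and `φ ∘ φ = -id` becomes `q * q = -1`. Since `q ^ 2 = -‖q‖ ^ 2`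
exactly for purely imaginary `q`, the quaternions squaring to `-1` are the imaginary units. -/

open Quaternion

theorem eq_map_one_mul_of_map_mul_right {M : Type*} [MulOneClass M] {f : M → M}
    (hf : ∀ w x, f (x * w) = f x * w) (x : M) : f x = f 1 * x := by
  simpa using hf x 1

theorem Quaternion.re_eq_zero_and_norm_eq_one_iff_mul_self (q : ℍ) :
    q.re = 0 ∧ ‖q‖ = 1 ↔ q * q = -1 := by
  constructor
  · rintro ⟨hre, hnorm⟩
    rw [← sq, sq_eq_neg_normSq.mpr hre, normSq_eq_norm_mul_self, hnorm, mul_one, coe_one]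
  · intro hq
    have hnorm : ‖q‖ = 1 := by
      have : ‖q‖ ^ 2 = 1 := by rw [sq, ← norm_mul, hq, norm_neg, norm_one]
      exact (pow_eq_one_iff_of_nonneg (norm_nonneg q) two_ne_zero).mp this
    refine ⟨sq_eq_neg_normSq.mp ?_, hnorm⟩
    rw [sq, hq, normSq_eq_norm_mul_self, hnorm, mul_one, coe_one]

/-- An `ℝ`-linear map `φ : ℍ → ℍ` satisfies `φ ∘ φ = -id` and commutes with every
right multiplication if and only if it is left multiplication by a (unique) purely
imaginary unit quaternion: this identifies the twistor fiber `SO(4)/U(2)` with the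
unit 2-sphere of imaginary quaternions. -/
theorem complex_structure_iff_left_mul_imaginary_unit
    (φ : Quaternion ℝ →ₗ[ℝ] Quaternion ℝ) :
    ((∀ x, φ (φ x) = -x) ∧ ∀ (w x : Quaternion ℝ), φ (x * w) = φ x * w) ↔
    ∃! q : Quaternion ℝ, q.re = 0 ∧ ‖q‖ = 1 ∧ ∀ x, φ x = q * x := by
  constructor
  · rintro ⟨hsq, hcomm⟩
    have hφ : ∀ x, φ x = φ 1 * x := eq_map_one_mul_of_map_mul_right hcomm
    have hq : φ 1 * φ 1 = -1 := by rw [← hφ, hsq]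
    obtain ⟨hre, hnorm⟩ := (re_eq_zero_and_norm_eq_one_iff_mul_self (φ 1)).mpr hq
    refine ⟨φ 1, ⟨hre, hnorm, hφ⟩, fun r ⟨_, _, hr⟩ ↦ ?_⟩
    simpa using (hr 1).symm
  · rintro ⟨q, ⟨hre, hnorm, hφ⟩, -⟩
    have hq : q * q = -1 := (re_eq_zero_and_norm_eq_one_iff_mul_self q).mp ⟨hre, hnorm⟩
    exact ⟨fun x ↦ by rw [hφ, hφ, ← mul_assoc, hq, neg_one_mul],
      fun w x ↦ by rw [hφ, hφ, mul_assoc]⟩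
end

section
/- Let A be an ℝ-linear endomorphism of the 3-dimensional real inner product space of purely imaginary quaternions which is self-adjoint (⟨A(x), y⟩ = ⟨x, A(y)⟩ for all purely imaginary x, y). If the quaternion commutators satisfy [A(j) + i·A(k), i] = 0, [A(i) - j·A(k), j] = 0 and [A(i) + k·A(j), k] = 0 (all products and commutators taken in ℍ), then A is a real scalar multiple of the identity. (This is the algebraic core of the converse direction of Theorem B: if the twistor almost complex structure 𝕁_Id is integrable then the self-dual curvature operator A = W⁺ + s/12·Id is a homothety, i.e. the metric is anti-selfdual.) -/
/-! The three relations say that `A(j) + i·A(k)`, `A(i) - j·A(k)` and `A(i) + k·A(j)` commute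
with `i`, `j` and `k` respectively, i.e. have no component orthogonal to that unit. For the
matrix `(a_pq)` of `A` in the basis `i, j, k` this means `a₁₁ = a₂₂ = a₃₃` and `a_pq = -a_qp`
for `p ≠ q`; self-adjointness makes the off-diagonal entries also symmetric, hence zero. -/

noncomputable def qi : Quaternion ℝ := ⟨0, 1, 0, 0⟩

noncomputable def qj : Quaternion ℝ := ⟨0, 0, 1, 0⟩

noncomputable def qk : Quaternion ℝ := ⟨0, 0, 0, 1⟩

open Quaternion

section Units

@[simp] theorem qi_re : qi.re = 0 := rfl
@[simp] theorem qi_imI : qi.imI = 1 := rfl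
@[simp] theorem qi_imJ : qi.imJ = 0 := rfl
@[simp] theorem qi_imK : qi.imK = 0 := rfl

@[simp] theorem qj_re : qj.re = 0 := rfl
@[simp] theorem qj_imI : qj.imI = 0 := rfl
@[simp] theorem qj_imJ : qj.imJ = 1 := rfl
@[simp] theorem qj_imK : qj.imK = 0 := rfl

@[simp] theorem qk_re : qk.re = 0 := rfl
@[simp] theorem qk_imI : qk.imI = 0 := rfl
@[simp] theorem qk_imJ : qk.imJ = 0 := rfl
@[simp] theorem qk_imK : qk.imK = 1 := rfl

variable (x : Quaternion ℝ)

theorem inner_qi : (inner ℝ x qi : ℝ) = x.imI := by simp [inner_def]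

theorem inner_qj : (inner ℝ x qj : ℝ) = x.imJ := by simp [inner_def]

theorem inner_qk : (inner ℝ x qk : ℝ) = x.imK := by simp [inner_def]

theorem eq_smul_qi_add_smul_qj_add_smul_qk_of_re_eq_zero (hx : x.re = 0) :
    x = x.imI • qi + x.imJ • qj + x.imK • qk := by
  ext <;> simp [hx]

theorem mul_qi_sub_qi_mul_eq_zero_iff : x * qi - qi * x = 0 ↔ x.imJ = 0 ∧ x.imK = 0 := by
  simp [Quaternion.ext_iff, sub_eq_zero, CharZero.neg_eq_self_iff, CharZero.eq_neg_self_iff, and_comm]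

theorem mul_qj_sub_qj_mul_eq_zero_iff : x * qj - qj * x = 0 ↔ x.imI = 0 ∧ x.imK = 0 := by
  simp [Quaternion.ext_iff, sub_eq_zero, CharZero.neg_eq_self_iff, CharZero.eq_neg_self_iff, and_comm]

theorem mul_qk_sub_qk_mul_eq_zero_iff : x * qk - qk * x = 0 ↔ x.imI = 0 ∧ x.imJ = 0 := by
  simp [Quaternion.ext_iff, sub_eq_zero, CharZero.neg_eq_self_iff, CharZero.eq_neg_self_iff, and_comm]

end Units

section Commutators

variable (p q : Quaternion ℝ)

theorem imJ_eq_and_imK_eq_neg_of_commutator_add_qi_mul_eq_zero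
    (h : (p + qi * q) * qi - qi * (p + qi * q) = 0) : p.imJ = q.imK ∧ p.imK = -q.imJ := by
  simpa [sub_eq_zero, add_eq_zero_iff_eq_neg] using (mul_qi_sub_qi_mul_eq_zero_iff _).1 h

theorem imI_eq_and_imK_eq_neg_of_commutator_sub_qj_mul_eq_zero
    (h : (p - qj * q) * qj - qj * (p - qj * q) = 0) : p.imI = q.imK ∧ p.imK = -q.imI := by
  simpa [sub_eq_zero, add_eq_zero_iff_eq_neg] using (mul_qj_sub_qj_mul_eq_zero_iff _).1 h

theorem imI_eq_and_imJ_eq_neg_of_commutator_add_qk_mul_eq_zero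
    (h : (p + qk * q) * qk - qk * (p + qk * q) = 0) : p.imI = q.imJ ∧ p.imJ = -q.imI := by
  simpa [sub_eq_zero, add_eq_zero_iff_eq_neg] using (mul_qk_sub_qk_mul_eq_zero_iff _).1 h

end Commutators

theorem LinearMap.apply_eq_smul_of_eq_smul_qi_qj_qk (A : Quaternion ℝ →ₗ[ℝ] Quaternion ℝ) {c : ℝ}
    (hi : A qi = c • qi) (hj : A qj = c • qj) (hk : A qk = c • qk)
    {x : Quaternion ℝ} (hx : x.re = 0) : A x = c • x := by
  rw [eq_smul_qi_add_smul_qj_add_smul_qk_of_re_eq_zero x hx]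
  simp only [map_add, map_smul, hi, hj, hk, smul_add, smul_comm c]

/-- Algebraic core of the converse direction of Theorem B: a self-adjoint
endomorphism `A` of the space of purely imaginary quaternions satisfying the
commutator relations `[A(j) + i·A(k), i] = [A(i) - j·A(k), j] = [A(i) + k·A(j), k] = 0`
is a real scalar multiple of the identity. -/
theorem selfadjoint_commutator_relations_imp_homothety
    (A : Quaternion ℝ →ₗ[ℝ] Quaternion ℝ)
    (him : ∀ x : Quaternion ℝ, x.re = 0 → (A x).re = 0)
    (hsym : ∀ x y : Quaternion ℝ, x.re = 0 → y.re = 0 →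
      (inner ℝ (A x) y : ℝ) = (inner ℝ x (A y) : ℝ))
    (h1 : (A qj + qi * A qk) * qi - qi * (A qj + qi * A qk) = 0)
    (h2 : (A qi - qj * A qk) * qj - qj * (A qi - qj * A qk) = 0)
    (h3 : (A qi + qk * A qj) * qk - qk * (A qi + qk * A qj) = 0) :
    ∃ c : ℝ, ∀ x : Quaternion ℝ, x.re = 0 → A x = c • x := by
  obtain ⟨hjj, hjk⟩ := imJ_eq_and_imK_eq_neg_of_commutator_add_qi_mul_eq_zero _ _ h1
  obtain ⟨hii, hik⟩ := imI_eq_and_imK_eq_neg_of_commutator_sub_qj_mul_eq_zero _ _ h2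
  obtain ⟨hii', hij⟩ := imI_eq_and_imJ_eq_neg_of_commutator_add_qk_mul_eq_zero _ _ h3
  have hsym_comm : ∀ x y : Quaternion ℝ, x.re = 0 → y.re = 0 →
      (inner ℝ (A x) y : ℝ) = (inner ℝ (A y) x : ℝ) := fun x y hx hy =>
    (hsym x y hx hy).trans (real_inner_comm _ _)
  have sij : (A qi).imJ = (A qj).imI := by
    simpa only [inner_qi, inner_qj] using hsym_comm qi qj qi_re qj_re
  have sik : (A qi).imK = (A qk).imI := by
    simpa only [inner_qi, inner_qk] using hsym_comm qi qk qi_re qk_re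
  have sjk : (A qj).imK = (A qk).imJ := by
    simpa only [inner_qj, inner_qk] using hsym_comm qj qk qj_re qk_re
  refine ⟨(A qi).imI, fun x hx => A.apply_eq_smul_of_eq_smul_qi_qj_qk ?_ ?_ ?_ hx⟩
  · ext <;> simp [him qi qi_re] <;> linarith
  · ext <;> simp [him qj qj_re] <;> linarith
  · ext <;> simp [him qk qk_re] <;> linarith
end

section
/- Let q be a purely imaginary quaternion with ‖q‖ = 1. For all x, y ∈ ℍ, each of the skew-adjoint endomorphisms x∧y - (q·x)∧(q·y) and (q·x)∧y + x∧(q·y) of ℍ equals left multiplication L_p by some purely imaginary quaternion p (equivalently, commutes with every right multiplication R_w). (This is the claim in the proof of Theorem B that the bivectors θᵢ∧θⱼ - Qθᵢ∧Qθⱼ and Qθᵢ∧θⱼ + θᵢ∧Qθⱼ are self-dual when Q preserves the orientation.) -/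
/-- The bivector `x ∧ y` of two quaternions: the skew-adjoint endomorphism
`v ↦ ⟨x, v⟩ • y - ⟨y, v⟩ • x` of `ℍ`. -/
noncomputable def wedgeQ (x y v : Quaternion ℝ) : Quaternion ℝ :=
  (inner ℝ x v : ℝ) • y - (inner ℝ y v : ℝ) • x

/-!
Write `B = x ∧ y`. Since `⟨q x, v⟩ = ⟨x, q̄ v⟩`, the two bivectors of the theorem are
`v ↦ B v - q B(q̄ v)` and `v ↦ B(q̄ v) + q B v`. Every bivector splits as `B v = p v + v w`
with `p` purely imaginary. For `q q̄ = 1` the right multiplications cancel in the first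
combination, leaving `(p - q p q̄) v`; for `q̄ = -q` they cancel in the second, leaving
`(q p - p q) v`.
-/

open scoped Quaternion

namespace Quaternion

theorem re_mul_comm {R : Type*} [CommRing R] (a b : ℍ[R]) : (a * b).re = (b * a).re := by
  simp only [re_mul]
  ring

theorem re_mul_mul_star {R : Type*} [CommRing R] (q p : ℍ[R]) :
    (q * p * star q).re = normSq q * p.re := by
  rw [mul_assoc, re_mul_comm, mul_assoc, star_mul_self, mul_coe_eq_smul, re_smul, smul_eq_mul]

theorem inner_mul_left (q x v : ℍ) : inner ℝ (q * x) v = inner ℝ x (star q * v) := by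
  rw [inner_def, inner_def, star_mul, star_star, mul_assoc, re_mul_comm, mul_assoc]

theorem mul_star_eq_one_of_norm_eq_one {q : ℍ} (hq : ‖q‖ = 1) : q * star q = 1 := by
  rw [self_mul_star, normSq_eq_norm_mul_self, hq, mul_one, coe_one]

end Quaternion

open Quaternion

noncomputable def wedgeQSelfDual (x y : ℍ) : ℍ := (4⁻¹ : ℝ) • (y * star x - x * star y)

noncomputable def wedgeQAntiSelfDual (x y : ℍ) : ℍ := (4⁻¹ : ℝ) • (star x * y - star y * x)

theorem re_wedgeQSelfDual (x y : ℍ) : (wedgeQSelfDual x y).re = 0 := by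
  simp only [wedgeQSelfDual, re_smul, re_sub, re_mul, re_star, imI_star, imJ_star, imK_star]
  ring

theorem wedgeQ_eq_mul_add_mul (x y v : ℍ) :
    wedgeQ x y v = wedgeQSelfDual x y * v + v * wedgeQAntiSelfDual x y := by
  ext <;> simp [wedgeQ, wedgeQSelfDual, wedgeQAntiSelfDual, inner_def] <;> ring

theorem wedgeQ_mul_mul (q x y v : ℍ) :
    wedgeQ (q * x) (q * y) v = q * wedgeQ x y (star q * v) := by
  simp only [wedgeQ, inner_mul_left, mul_sub, mul_smul_comm]

theorem wedgeQ_mul_add_wedgeQ_mul (q x y v : ℍ) :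
    wedgeQ (q * x) y v + wedgeQ x (q * y) v = wedgeQ x y (star q * v) + q * wedgeQ x y v := by
  simp only [wedgeQ, inner_mul_left, mul_sub, mul_smul_comm]
  abel

/-- For a purely imaginary unit quaternion `q`, the endomorphisms
`x∧y - (q·x)∧(q·y)` and `(q·x)∧y + x∧(q·y)` of `ℍ` are left multiplications by
purely imaginary quaternions (i.e. these bivectors are self-dual): the claim in
the proof of Theorem B that `θᵢ∧θⱼ - Qθᵢ∧Qθⱼ` and `Qθᵢ∧θⱼ + θᵢ∧Qθⱼ` lie in `Λ⁺`. -/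
theorem selfdual_bivectors (q : Quaternion ℝ) (hq : q.re = 0) (hnorm : ‖q‖ = 1)
    (x y : Quaternion ℝ) :
    (∃ p : Quaternion ℝ, p.re = 0 ∧
      ∀ v, wedgeQ x y v - wedgeQ (q * x) (q * y) v = p * v) ∧
    (∃ p : Quaternion ℝ, p.re = 0 ∧
      ∀ v, wedgeQ (q * x) y v + wedgeQ x (q * y) v = p * v) := by
  set p := wedgeQSelfDual x y
  have hp : p.re = 0 := re_wedgeQSelfDual x y
  have hunit : q * star q = 1 := mul_star_eq_one_of_norm_eq_one hnorm
  have hstar : star q = -q := star_eq_neg.mpr hq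
  refine ⟨⟨p - q * p * star q, ?_, fun v => ?_⟩, ⟨q * p - p * q, ?_, fun v => ?_⟩⟩
  · rw [re_sub, re_mul_mul_star, hp, mul_zero, sub_zero]
  · rw [wedgeQ_mul_mul, wedgeQ_eq_mul_add_mul, wedgeQ_eq_mul_add_mul]
    simp only [mul_add, ← mul_assoc, hunit, one_mul, sub_mul]
    abel
  · rw [re_sub, re_mul_comm, sub_self]
  · rw [wedgeQ_mul_add_wedgeQ_mul, wedgeQ_eq_mul_add_mul, wedgeQ_eq_mul_add_mul, hstar]
    simp only [mul_add, neg_mul, mul_neg, ← mul_assoc, sub_mul]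
    abel
end

section
/- For a purely imaginary quaternion Q with ‖Q‖ = 1, the commutator [i - Q·k, Q] vanishes if and only if Q = j. (This is the algebraic core of Theorem E: for an anti-selfdual metric with nowhere-zero scalar curvature, the vanishing of the vertical Nijenhuis tensor forces f(m,Q) = Q, so 𝕁_Id is, even locally, the only integrable compatible complex structure on the twistor space.) -/
/- Writing `Q = a i + b j + c k`, one has `i - Q k = c + (1 - b) i + a j`, so the commutator is
`2 (a c i + c (b - 1) j + (b - a² - b²) k)`. Its `j`-component forces `c = 0` or `b = 1`, and
with `a² + b² + c² = 1` the `k`-component then leaves only `Q = j`. -/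

open Quaternion

lemma commutator_i_sub_mul_k_eq {Q : ℍ[ℝ]} (him : Q.re = 0) :
    (qi - Q * qk) * Q - Q * (qi - Q * qk) =
      ⟨0, 2 * (Q.imI * Q.imK), 2 * (Q.imK * (Q.imJ - 1)),
        2 * (Q.imJ - Q.imI ^ 2 - Q.imJ ^ 2)⟩ := by
  ext <;> simp only [re_sub, imI_sub, imJ_sub, imK_sub, re_mul, imI_mul, imJ_mul, imK_mul, him] <;>
    simp only [qi, qk] <;> ring

lemma imI_sq_add_imJ_sq_add_imK_sq_of_re_eq_zero {Q : ℍ[ℝ]} (him : Q.re = 0)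
    (hnorm : ‖Q‖ = 1) : Q.imI ^ 2 + Q.imJ ^ 2 + Q.imK ^ 2 = 1 := by
  have h := normSq_eq_norm_mul_self Q
  rw [hnorm, normSq_def', him] at h
  linarith

lemma eq_zero_one_zero_of_sq_add_sq_add_sq_eq_one {a b c : ℝ} (hsphere : a ^ 2 + b ^ 2 + c ^ 2 = 1)
    (hj : c * (b - 1) = 0) (hk : b - a ^ 2 - b ^ 2 = 0) : a = 0 ∧ b = 1 ∧ c = 0 := by
  have hb : b = 1 := by
    rcases mul_eq_zero.1 hj with rfl | hb <;> linarith
  subst hb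
  exact ⟨sq_eq_zero_iff.1 (by linarith), rfl, sq_eq_zero_iff.1 (by linarith)⟩

/-- Algebraic core of Theorem E: for a purely imaginary unit quaternion `Q`, the
commutator `[i - Q·k, Q]` vanishes if and only if `Q = j`; hence for an
anti-selfdual metric with nowhere-zero scalar curvature, `𝕁_Id` is, even locally,
the only integrable compatible complex structure on the twistor space. -/
theorem commutator_vanishes_iff_eq_j (Q : Quaternion ℝ) (him : Q.re = 0)
    (hnorm : ‖Q‖ = 1) :
    (qi - Q * qk) * Q - Q * (qi - Q * qk) = 0 ↔ Q = qj := by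
  rw [commutator_i_sub_mul_k_eq him]
  constructor
  · intro h
    have hj : Q.imK * (Q.imJ - 1) = 0 := by simpa using congrArg QuaternionAlgebra.imJ h
    have hk : Q.imJ - Q.imI ^ 2 - Q.imJ ^ 2 = 0 := by simpa using congrArg QuaternionAlgebra.imK h
    obtain ⟨ha, hb, hc⟩ := eq_zero_one_zero_of_sq_add_sq_add_sq_eq_one
      (imI_sq_add_imJ_sq_add_imK_sq_of_re_eq_zero him hnorm) hj hk
    ext <;> simp [qj, him, ha, hb, hc]
  · rintro rfl
    ext <;> simp [qj]
end
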